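/- arXiv:2603.08149 — 6 statements merged into one kernel-verified Lean document; each statement's English description precedes it below -/
import Mathlib

section
/- Let μ be a probability measure on [0,1]² both of whose coordinate marginals are the Lebesgue (uniform) measure on [0,1], and let C(u,v) = μ([0,u]×[0,v]) denote its distribution function. Then ∫_{[0,1]²} max(u+v−1, 0) dμ(u,v) = ∫₀¹ C(u, 1−u) du. -/
/-! On the unit square `max (u + v - 1) 0` is the length of the interval `(1 - v, u)`, so by
Tonelli the left side is `∫₀¹ μ((t, ∞) × (1 - t, ∞)) dt`. The uniform marginals give
`{u > t}` and `{v ≤ 1 - t}` the same mass `1 - t`, hence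
`μ((t, ∞) × (1 - t, ∞)) = μ((-∞, t] × (-∞, 1 - t]) = C(t, 1 - t)`. -/

open MeasureTheory Set

lemma measure_inter_eq_measure_compl_inter_compl {α : Type*} [MeasurableSpace α]
    {μ : Measure α} [IsFiniteMeasure μ] {A B : Set α} (hA : MeasurableSet A)
    (hB : MeasurableSet B) (h : μ A = μ Bᶜ) : μ (A ∩ B) = μ (Aᶜ ∩ Bᶜ) := by
  have hAB : μ (A ∩ B) + μ (A \ B) = μ A := measure_inter_add_sdiff A hB
  have hBA : μ (Aᶜ ∩ Bᶜ) + μ (A \ B) = μ Bᶜ := by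
    rw [sdiff_eq, inter_comm A, inter_comm Aᶜ, ← sdiff_eq, add_comm]
    exact measure_inter_add_sdiff Bᶜ hA
  exact (ENNReal.add_left_inj (measure_ne_top μ _)).mp (by rw [hAB, hBA, h])

lemma ae_mem_prod_of_ae_map {α β : Type*} [MeasurableSpace α] [MeasurableSpace β]
    {μ : Measure (α × β)} {s : Set α} {t : Set β} (hs : ∀ᵐ x ∂μ.map Prod.fst, x ∈ s)
    (ht : ∀ᵐ y ∂μ.map Prod.snd, y ∈ t) : ∀ᵐ p ∂μ, p ∈ s ×ˢ t := by
  filter_upwards [ae_of_ae_map measurable_fst.aemeasurable hs,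
    ae_of_ae_map measurable_snd.aemeasurable ht] with p hp₁ hp₂ using ⟨hp₁, hp₂⟩

lemma ofReal_max_add_sub_one_zero_eq_restrict_volume {x y : ℝ} (hx : x ≤ 1) (hy : y ≤ 1) :
    ENNReal.ofReal (max (x + y - 1) 0) =
      volume.restrict (Icc (0:ℝ) 1) {t | t < x ∧ 1 - t < y} := by
  have hIoo : {t | t < x ∧ 1 - t < y} = Ioo (1 - y) x := by
    ext t; simp only [mem_ofPred_eq, mem_Ioo, sub_lt_comm, and_comm]
  rw [hIoo, Measure.restrict_apply measurableSet_Ioo,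
    inter_eq_left.mpr (Ioo_subset_Icc_self.trans (Icc_subset_Icc (by linarith) hx)),
    Real.volume_Ioo, ENNReal.ofReal_max, ENNReal.ofReal_zero, max_zero, sub_sub_eq_add_sub]

lemma measure_Ioi_prod_Ioi_eq_measure_Icc_prod_Icc {μ : Measure (ℝ × ℝ)} [IsFiniteMeasure μ]
    (hfst : μ.map Prod.fst = volume.restrict (Icc (0:ℝ) 1))
    (hsnd : μ.map Prod.snd = volume.restrict (Icc (0:ℝ) 1)) {t : ℝ} (ht : t ∈ Icc (0:ℝ) 1) :
    μ (Ioi t ×ˢ Ioi (1 - t)) = μ (Icc 0 t ×ˢ Icc 0 (1 - t)) := by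
  obtain ⟨ht₀, ht₁⟩ := ht
  have hIoi : Ioi t ∩ Icc 0 1 = Ioc t 1 := by
    ext x; simp only [mem_inter_iff, mem_Ioi, mem_Icc, mem_Ioc]; grind
  have hIic {s : ℝ} (hs : s ≤ 1) : Iic s ∩ Icc 0 1 = Icc 0 s := by
    ext x; simp only [mem_inter_iff, mem_Iic, mem_Icc]; grind
  have hfst_Ioi : μ (Prod.fst ⁻¹' Ioi t) = ENNReal.ofReal (1 - t) := by
    rw [← Measure.map_apply measurable_fst measurableSet_Ioi, hfst,
      Measure.restrict_apply measurableSet_Ioi, hIoi, Real.volume_Ioc]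
  have hsnd_Iic : μ (Prod.snd ⁻¹' Ioi (1 - t))ᶜ = ENNReal.ofReal (1 - t) := by
    rw [← preimage_compl, compl_Ioi, ← Measure.map_apply measurable_snd measurableSet_Iic, hsnd,
      Measure.restrict_apply measurableSet_Iic, hIic (by linarith), Real.volume_Icc, sub_zero]
  have hsupp : μ (Icc (0:ℝ) 1 ×ˢ Icc (0:ℝ) 1)ᶜ = 0 :=
    ae_mem_prod_of_ae_map (hfst ▸ ae_restrict_mem measurableSet_Icc)
      (hsnd ▸ ae_restrict_mem measurableSet_Icc)
  calc μ (Ioi t ×ˢ Ioi (1 - t))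
      = μ (Iic t ×ˢ Iic (1 - t)) := by
        rw [prod_eq, prod_eq, ← compl_Ioi, ← compl_Ioi, preimage_compl, preimage_compl]
        exact measure_inter_eq_measure_compl_inter_compl (measurable_fst measurableSet_Ioi)
          (measurable_snd measurableSet_Ioi) (hfst_Ioi.trans hsnd_Iic.symm)
    _ = μ ((Iic t ×ˢ Iic (1 - t)) ∩ (Icc 0 1 ×ˢ Icc 0 1)) := (measure_inter_conull hsupp).symm
    _ = μ (Icc 0 t ×ˢ Icc 0 (1 - t)) := by
        rw [prod_inter_prod, hIic ht₁, hIic (by linarith)]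

/-- If `μ` is a probability measure on `[0,1]²` whose coordinate marginals
are both the uniform (Lebesgue) measure on `[0,1]`, and `C(u,v) = μ([0,u]×[0,v])` is its
distribution function, then `∫_{[0,1]²} max(u+v−1, 0) dμ = ∫₀¹ C(u, 1−u) du`. -/
theorem W_integral_eq_antidiagonal_integral
    (μ : Measure (ℝ × ℝ)) [IsProbabilityMeasure μ]
    (hfst : μ.map Prod.fst = volume.restrict (Set.Icc (0:ℝ) 1))
    (hsnd : μ.map Prod.snd = volume.restrict (Set.Icc (0:ℝ) 1))
    (C : ℝ → ℝ → ℝ)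
    (hC : ∀ u v : ℝ, C u v = (μ (Set.Icc (0:ℝ) u ×ˢ Set.Icc (0:ℝ) v)).toReal) :
    ∫ p in Set.Icc (0:ℝ) 1 ×ˢ Set.Icc (0:ℝ) 1, max (p.1 + p.2 - 1) 0 ∂μ
      = ∫ u in (0:ℝ)..1, C u (1 - u) := by
  set I := Icc (0:ℝ) 1
  have hsupp : ∀ᵐ p ∂μ, p ∈ I ×ˢ I := ae_mem_prod_of_ae_map
    (hfst ▸ ae_restrict_mem measurableSet_Icc) (hsnd ▸ ae_restrict_mem measurableSet_Icc)
  set T : Set ((ℝ × ℝ) × ℝ) := {q | q.2 < q.1.1 ∧ 1 - q.2 < q.1.2}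
  have hT : MeasurableSet T :=
    (measurableSet_lt measurable_snd measurable_fst.fst).inter
      (measurableSet_lt (measurable_const.sub measurable_snd) measurable_fst.snd)
  calc ∫ p in I ×ˢ I, max (p.1 + p.2 - 1) 0 ∂μ
      = (∫⁻ p, ENNReal.ofReal (max (p.1 + p.2 - 1) 0) ∂μ).toReal := by
        rw [Measure.restrict_eq_self_of_ae_mem hsupp]
        exact integral_eq_lintegral_of_nonneg_ae (.of_forall fun _ ↦ le_max_right _ _)
          (by fun_prop)
    _ = (∫⁻ p, volume.restrict I (Prod.mk p ⁻¹' T) ∂μ).toReal := by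
        congr 1
        exact lintegral_congr_ae (hsupp.mono fun p hp ↦
          ofReal_max_add_sub_one_zero_eq_restrict_volume hp.1.2 hp.2.2)
    _ = (∫⁻ t in I, μ ((·, t) ⁻¹' T)).toReal := by
        rw [← Measure.prod_apply hT, Measure.prod_apply_symm hT]
    _ = ∫ t in I, (μ ((·, t) ⁻¹' T)).toReal :=
        (integral_toReal (measurable_measure_prodMk_right hT).aemeasurable
          (.of_forall fun _ ↦ measure_lt_top μ _)).symm
    _ = ∫ t in I, C t (1 - t) := setIntegral_congr_fun measurableSet_Icc fun t ht ↦ by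
        rw [hC, ← measure_Ioi_prod_Ioi_eq_measure_Icc_prod_Icc hfst hsnd ht]; rfl
    _ = ∫ u in (0:ℝ)..1, C u (1 - u) := by
        rw [intervalIntegral.integral_of_le zero_le_one, integral_Icc_eq_integral_Ioc]
end

section
/- Let μ be a probability measure on [0,1]² both of whose coordinate marginals are the Lebesgue (uniform) measure on [0,1], and let C(u,v) = μ([0,u]×[0,v]) denote its distribution function. Then ∫_{[0,1]²} |1−u−v| dμ(u,v) = 2 ∫₀¹ C(u, 1−u) du. Consequently, 3 ∫_{[0,1]²} |1−u−v| dμ(u,v) − 1 = 6 ∫₀¹ C(u, 1−u) du − 1, i.e., the two representations of the W-footrule coefficient Φ_C coincide. -/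
/-!
If `(U, V) ∼ μ` then `E U = E V = 1/2`, so `1 - U - V` has mean zero and
`E |1 - U - V| = 2 E (1 - U - V)⁺`. For `U, V ≥ 0` the positive part `(1 - U - V)⁺` is the length of
`{u ∈ [0,1] | U ≤ u ≤ 1 - V}`, so by Tonelli `E (1 - U - V)⁺ = ∫₀¹ μ([0,u] × [0,1-u]) du`.
-/

open MeasureTheory Set

section UniformLaw

variable {Ω : Type*} [MeasurableSpace Ω] {μ : Measure Ω} {X : Ω → ℝ}

lemma ae_mem_of_map_eq_restrict {s : Set ℝ} (hs : MeasurableSet s) (hX : AEMeasurable X μ)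
    (h : μ.map X = volume.restrict s) : ∀ᵐ ω ∂μ, X ω ∈ s :=
  ae_of_ae_map hX (h ▸ ae_restrict_mem hs)

lemma integrable_of_map_eq_restrict_Icc {a b : ℝ} (hX : Measurable X)
    (h : μ.map X = volume.restrict (Icc a b)) : Integrable X μ :=
  (h ▸ continuous_id.integrableOn_Icc : Integrable id (μ.map X)).comp_measurable hX

lemma integral_eq_of_map_eq_restrict_Icc {a b : ℝ} (hab : a ≤ b) (hX : AEMeasurable X μ)
    (h : μ.map X = volume.restrict (Icc a b)) : ∫ ω, X ω ∂μ = (b ^ 2 - a ^ 2) / 2 := by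
  calc ∫ ω, X ω ∂μ = ∫ x in Icc a b, x := by
        rw [← h]; exact (integral_map (f := fun x => x) hX aestronglyMeasurable_id).symm
    _ = (b ^ 2 - a ^ 2) / 2 := by
        rw [integral_Icc_eq_integral_Ioc, ← intervalIntegral.integral_of_le hab, integral_id]

end UniformLaw

lemma integral_posPart_eq_toReal_lintegral {α : Type*} [MeasurableSpace α] {μ : Measure α}
    {f : α → ℝ} (hf : AEStronglyMeasurable f μ) :
    ∫ x, (f x)⁺ ∂μ = (∫⁻ x, ENNReal.ofReal (f x) ∂μ).toReal := by
  rw [integral_eq_lintegral_of_nonneg_ae (.of_forall fun x => posPart_nonneg (f x)) (by fun_prop)]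
  simp [posPart]

lemma measurableSet_setOf_mem_Icc_prod_Icc_sub (t : ℝ) :
    MeasurableSet {q : ℝ × (ℝ × ℝ) | q.2 ∈ Icc 0 q.1 ×ˢ Icc 0 (t - q.1)} := by
  measurability

variable {μ : Measure (ℝ × ℝ)}

lemma lintegral_ofReal_sub_fst_sub_snd [SFinite μ] (h : ∀ᵐ p ∂μ, 0 ≤ p.1 ∧ 0 ≤ p.2) (t : ℝ) :
    ∫⁻ p, ENNReal.ofReal (t - p.1 - p.2) ∂μ
      = ∫⁻ u in Icc 0 t, μ (Icc 0 u ×ˢ Icc 0 (t - u)) := by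
  have hT := measurableSet_setOf_mem_Icc_prod_Icc_sub t
  calc ∫⁻ p, ENNReal.ofReal (t - p.1 - p.2) ∂μ
      = ((volume.restrict (Icc 0 t)).prod μ) {q | q.2 ∈ Icc 0 q.1 ×ˢ Icc 0 (t - q.1)} := ?_
    _ = _ := Measure.prod_apply hT
  rw [Measure.prod_apply_symm hT]
  refine lintegral_congr_ae ?_
  filter_upwards [h] with p ⟨h1, h2⟩
  have hslice : (fun u => (u, p)) ⁻¹' {q : ℝ × (ℝ × ℝ) | q.2 ∈ Icc 0 q.1 ×ˢ Icc 0 (t - q.1)}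
      = Icc p.1 (t - p.2) := by
    ext u
    simp only [mem_preimage, mem_ofPred_eq, mem_prod, mem_Icc]
    constructor
    · rintro ⟨⟨-, hu⟩, -, hv⟩
      exact ⟨hu, by linarith⟩
    · rintro ⟨hu, hv⟩
      exact ⟨⟨h1, hu⟩, h2, by linarith⟩
  rw [hslice, Measure.restrict_apply measurableSet_Icc, Icc_inter_Icc, max_eq_left h1,
    min_eq_left (by linarith), Real.volume_Icc, sub_right_comm]

lemma integral_toReal_measure_Icc_prod_Icc_sub [IsFiniteMeasure μ] (t : ℝ) :
    ∫ u in Icc 0 t, (μ (Icc 0 u ×ˢ Icc 0 (t - u))).toReal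
      = (∫⁻ u in Icc 0 t, μ (Icc 0 u ×ˢ Icc 0 (t - u))).toReal :=
  integral_toReal
    (measurable_measure_prodMk_left (measurableSet_setOf_mem_Icc_prod_Icc_sub t)).aemeasurable
    (.of_forall fun _ => measure_lt_top μ _)

lemma ae_mem_unitSquare_of_map_eq
    (hfst : μ.map Prod.fst = volume.restrict (Icc (0:ℝ) 1))
    (hsnd : μ.map Prod.snd = volume.restrict (Icc (0:ℝ) 1)) :
    ∀ᵐ p ∂μ, p ∈ Icc (0:ℝ) 1 ×ˢ Icc (0:ℝ) 1 := by
  filter_upwards [ae_mem_of_map_eq_restrict measurableSet_Icc measurable_fst.aemeasurable hfst,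
    ae_mem_of_map_eq_restrict measurableSet_Icc measurable_snd.aemeasurable hsnd] with p h1 h2
  exact ⟨h1, h2⟩

lemma integrable_one_sub_fst_sub_snd_of_map_eq [IsFiniteMeasure μ]
    (hfst : μ.map Prod.fst = volume.restrict (Icc (0:ℝ) 1))
    (hsnd : μ.map Prod.snd = volume.restrict (Icc (0:ℝ) 1)) :
    Integrable (fun p : ℝ × ℝ => 1 - p.1 - p.2) μ :=
  ((integrable_const 1).sub (integrable_of_map_eq_restrict_Icc measurable_fst hfst)).sub
    (integrable_of_map_eq_restrict_Icc measurable_snd hsnd)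

lemma integral_one_sub_fst_sub_snd_of_map_eq [IsProbabilityMeasure μ]
    (hfst : μ.map Prod.fst = volume.restrict (Icc (0:ℝ) 1))
    (hsnd : μ.map Prod.snd = volume.restrict (Icc (0:ℝ) 1)) :
    ∫ p, (1 - p.1 - p.2) ∂μ = 0 := by
  have hX : Integrable (fun p : ℝ × ℝ => p.1) μ :=
    integrable_of_map_eq_restrict_Icc measurable_fst hfst
  have hY : Integrable (fun p : ℝ × ℝ => p.2) μ :=
    integrable_of_map_eq_restrict_Icc measurable_snd hsnd
  have h1X : Integrable (fun p : ℝ × ℝ => 1 - p.1) μ := (integrable_const 1).sub hX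
  rw [integral_sub h1X hY, integral_sub (integrable_const 1) hX,
    integral_eq_of_map_eq_restrict_Icc zero_le_one measurable_fst.aemeasurable hfst,
    integral_eq_of_map_eq_restrict_Icc zero_le_one measurable_snd.aemeasurable hsnd]
  norm_num

/-- If `μ` is a probability measure on `[0,1]²` whose coordinate marginals
are both the uniform (Lebesgue) measure on `[0,1]`, and `C(u,v) = μ([0,u]×[0,v])`, then
`∫_{[0,1]²} |1−u−v| dμ = 2 ∫₀¹ C(u, 1−u) du`, and consequently the two representations
of the W-footrule coefficient coincide:
`3 ∫_{[0,1]²} |1−u−v| dμ − 1 = 6 ∫₀¹ C(u, 1−u) du − 1`. -/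
theorem abs_integral_eq_two_antidiagonal_integral
    (μ : Measure (ℝ × ℝ)) [IsProbabilityMeasure μ]
    (hfst : μ.map Prod.fst = volume.restrict (Set.Icc (0:ℝ) 1))
    (hsnd : μ.map Prod.snd = volume.restrict (Set.Icc (0:ℝ) 1))
    (C : ℝ → ℝ → ℝ)
    (hC : ∀ u v : ℝ, C u v = (μ (Set.Icc (0:ℝ) u ×ˢ Set.Icc (0:ℝ) v)).toReal) :
    (∫ p in Set.Icc (0:ℝ) 1 ×ˢ Set.Icc (0:ℝ) 1, |1 - p.1 - p.2| ∂μ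
        = 2 * ∫ u in (0:ℝ)..1, C u (1 - u)) ∧
    (3 * (∫ p in Set.Icc (0:ℝ) 1 ×ˢ Set.Icc (0:ℝ) 1, |1 - p.1 - p.2| ∂μ) - 1
        = 6 * (∫ u in (0:ℝ)..1, C u (1 - u)) - 1) := by
  have hsq := ae_mem_unitSquare_of_map_eq hfst hsnd
  have hnonneg : ∀ᵐ p ∂μ, 0 ≤ p.1 ∧ 0 ≤ p.2 := hsq.mono fun _ hp => ⟨hp.1.1, hp.2.1⟩
  have hmain : ∫ p in Icc (0:ℝ) 1 ×ˢ Icc (0:ℝ) 1, |1 - p.1 - p.2| ∂μ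
      = 2 * ∫ u in (0:ℝ)..1, C u (1 - u) := by
    have hint := integrable_one_sub_fst_sub_snd_of_map_eq hfst hsnd
    rw [Measure.restrict_eq_self_of_ae_mem hsq,
      integral_abs_eq_two_mul_integral_posPart_sub_integral hint,
      integral_one_sub_fst_sub_snd_of_map_eq hfst hsnd,
      integral_posPart_eq_toReal_lintegral hint.aestronglyMeasurable,
      lintegral_ofReal_sub_fst_sub_snd hnonneg, intervalIntegral.integral_of_le zero_le_one,
      ← integral_Icc_eq_integral_Ioc]
    simp only [hC, integral_toReal_measure_Icc_prod_Icc_sub, sub_zero]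
  exact ⟨hmain, by rw [hmain]; ring⟩
end

section
/- Let C be a bivariate copula. Then Φ_C = −1 if and only if C(u,v) = W(u,v) = max(u+v−1, 0) for all (u,v) ∈ [0,1]². -/
open MeasureTheory

/-- A bivariate copula: a function `C : [0,1]² → [0,1]` with the standard boundary
conditions and the 2-increasing property. -/
def IsCopula (C : ℝ → ℝ → ℝ) : Prop :=
  (∀ u ∈ Set.Icc (0:ℝ) 1, ∀ v ∈ Set.Icc (0:ℝ) 1, C u v ∈ Set.Icc (0:ℝ) 1) ∧
  (∀ u ∈ Set.Icc (0:ℝ) 1, C u 0 = 0) ∧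
  (∀ v ∈ Set.Icc (0:ℝ) 1, C 0 v = 0) ∧
  (∀ u ∈ Set.Icc (0:ℝ) 1, C u 1 = u) ∧
  (∀ v ∈ Set.Icc (0:ℝ) 1, C 1 v = v) ∧
  (∀ u₁ u₂ v₁ v₂ : ℝ, 0 ≤ u₁ → u₁ ≤ u₂ → u₂ ≤ 1 → 0 ≤ v₁ → v₁ ≤ v₂ → v₂ ≤ 1 →
    0 ≤ C u₂ v₂ - C u₁ v₂ - C u₂ v₁ + C u₁ v₁)

/-- The W-footrule coefficient of a copula: `Φ_C = 6 ∫₀¹ C(u,1−u) du − 1`. -/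
noncomputable def WFootrule (C : ℝ → ℝ → ℝ) : ℝ :=
  6 * (∫ u in (0:ℝ)..1, C u (1 - u)) - 1

/-!
A copula is squeezed between the Fréchet–Hoeffding bound `W` and its values on the
antidiagonal: for `u + v ≤ 1` monotonicity gives `C(u,v) ≤ C(u,1-u)`, and for `u + v ≥ 1`
the Lipschitz bound in the first variable gives `C(u,v) ≤ u + v - 1 + C(1-v,v)`. Since
`Φ_C + 1 = 6 ∫₀¹ C(u,1-u) du` and `u ↦ C(u,1-u)` is continuous and nonnegative, `Φ_C = -1`
forces `C` to vanish on the antidiagonal, hence `C = W`.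
-/

open Set

theorem eqOn_zero_of_intervalIntegral_eq_zero {f : ℝ → ℝ} {a b : ℝ} (hab : a < b)
    (hf : ContinuousOn f (Icc a b)) (hnn : ∀ x ∈ Icc a b, 0 ≤ f x)
    (hzero : ∫ x in a..b, f x = 0) : EqOn f 0 (Icc a b) := by
  have hnn_ae : 0 ≤ᵐ[volume.restrict (Ioc a b)] f :=
    (ae_restrict_mem measurableSet_Ioc).mono fun x hx => hnn x (Ioc_subset_Icc_self hx)
  have hae := (intervalIntegral.integral_eq_zero_iff_of_le_of_nonneg_ae hab.le hnn_ae
    (hf.intervalIntegrable_of_Icc hab.le)).1 hzero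
  rw [Measure.restrict_congr_set Ioc_ae_eq_Icc] at hae
  exact Measure.eqOn_Icc_of_ae_eq volume hab.ne hae hf continuousOn_const

namespace IsCopula

variable {C : ℝ → ℝ → ℝ} (hC : IsCopula C)
include hC

theorem nonneg {u v : ℝ} (hu : u ∈ Icc (0:ℝ) 1) (hv : v ∈ Icc (0:ℝ) 1) : 0 ≤ C u v :=
  (hC.1 u hu v hv).1

theorem sub_left_mem_Icc {u₁ u₂ v : ℝ} (hu₁ : 0 ≤ u₁) (hu : u₁ ≤ u₂) (hu₂ : u₂ ≤ 1)
    (hv : v ∈ Icc (0:ℝ) 1) : C u₂ v - C u₁ v ∈ Icc 0 (u₂ - u₁) := by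
  obtain ⟨-, hu0, -, hu1, -, h2inc⟩ := hC
  have hlow := h2inc u₁ u₂ 0 v hu₁ hu hu₂ le_rfl hv.1 hv.2
  have hupp := h2inc u₁ u₂ v 1 hu₁ hu hu₂ hv.1 hv.2 le_rfl
  rw [hu0 u₁ ⟨hu₁, by linarith⟩, hu0 u₂ ⟨by linarith, hu₂⟩] at hlow
  rw [hu1 u₁ ⟨hu₁, by linarith⟩, hu1 u₂ ⟨by linarith, hu₂⟩] at hupp
  constructor <;> linarith

theorem sub_right_mem_Icc {u v₁ v₂ : ℝ} (hu : u ∈ Icc (0:ℝ) 1) (hv₁ : 0 ≤ v₁) (hv : v₁ ≤ v₂)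
    (hv₂ : v₂ ≤ 1) : C u v₂ - C u v₁ ∈ Icc 0 (v₂ - v₁) := by
  obtain ⟨-, -, h0v, -, h1v, h2inc⟩ := hC
  have hlow := h2inc 0 u v₁ v₂ le_rfl hu.1 hu.2 hv₁ hv hv₂
  have hupp := h2inc u 1 v₁ v₂ hu.1 hu.2 le_rfl hv₁ hv hv₂
  rw [h0v v₁ ⟨hv₁, by linarith⟩, h0v v₂ ⟨by linarith, hv₂⟩] at hlow
  rw [h1v v₁ ⟨hv₁, by linarith⟩, h1v v₂ ⟨by linarith, hv₂⟩] at hupp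
  constructor <;> linarith

theorem add_sub_one_le {u v : ℝ} (hu : u ∈ Icc (0:ℝ) 1) (hv : v ∈ Icc (0:ℝ) 1) :
    u + v - 1 ≤ C u v := by
  have h := (hC.sub_left_mem_Icc hu.1 hu.2 le_rfl hv).2
  obtain ⟨-, -, -, -, h1v, -⟩ := hC
  rw [h1v v hv] at h
  linarith

theorem abs_sub_left_le {u₁ u₂ v : ℝ} (hu₁ : u₁ ∈ Icc (0:ℝ) 1) (hu₂ : u₂ ∈ Icc (0:ℝ) 1)
    (hv : v ∈ Icc (0:ℝ) 1) : |C u₁ v - C u₂ v| ≤ |u₁ - u₂| := by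
  rcases le_total u₁ u₂ with h | h
  · have := hC.sub_left_mem_Icc hu₁.1 h hu₂.2 hv
    rw [abs_sub_comm, abs_sub_comm u₁, abs_of_nonneg this.1, abs_of_nonneg (by linarith)]
    exact this.2
  · have := hC.sub_left_mem_Icc hu₂.1 h hu₁.2 hv
    rw [abs_of_nonneg this.1, abs_of_nonneg (by linarith)]
    exact this.2

theorem abs_sub_right_le {u v₁ v₂ : ℝ} (hu : u ∈ Icc (0:ℝ) 1) (hv₁ : v₁ ∈ Icc (0:ℝ) 1)
    (hv₂ : v₂ ∈ Icc (0:ℝ) 1) : |C u v₁ - C u v₂| ≤ |v₁ - v₂| := by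
  rcases le_total v₁ v₂ with h | h
  · have := hC.sub_right_mem_Icc hu hv₁.1 h hv₂.2
    rw [abs_sub_comm, abs_sub_comm v₁, abs_of_nonneg this.1, abs_of_nonneg (by linarith)]
    exact this.2
  · have := hC.sub_right_mem_Icc hu hv₂.1 h hv₁.2
    rw [abs_of_nonneg this.1, abs_of_nonneg (by linarith)]
    exact this.2

theorem lipschitzOnWith_antidiagonal :
    LipschitzOnWith 2 (fun u => C u (1 - u)) (Icc 0 1) := by
  refine LipschitzOnWith.of_dist_le_mul fun x hx y hy => ?_
  have hx' : 1 - x ∈ Icc (0:ℝ) 1 := Icc.one_sub_mem hx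
  have hy' : 1 - y ∈ Icc (0:ℝ) 1 := Icc.one_sub_mem hy
  have hleft := hC.abs_sub_left_le hx hy hx'
  have hright := hC.abs_sub_right_le hy hx' hy'
  rw [Real.dist_eq, Real.dist_eq, NNReal.coe_ofNat]
  calc |C x (1 - x) - C y (1 - y)|
      ≤ |C x (1 - x) - C y (1 - x)| + |C y (1 - x) - C y (1 - y)| := abs_sub_le _ _ _
    _ ≤ |x - y| + |(1 - x) - (1 - y)| := add_le_add hleft hright
    _ = 2 * |x - y| := by rw [show (1 - x) - (1 - y) = -(x - y) by ring, abs_neg]; ring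

theorem eq_max_of_antidiagonal_eq_zero (hzero : ∀ x ∈ Icc (0:ℝ) 1, C x (1 - x) = 0)
    {u v : ℝ} (hu : u ∈ Icc (0:ℝ) 1) (hv : v ∈ Icc (0:ℝ) 1) : C u v = max (u + v - 1) 0 := by
  rcases le_total (u + v) 1 with hle | hge
  · have hmono := (hC.sub_right_mem_Icc hu hv.1 (by linarith : v ≤ 1 - u) (by linarith [hu.1])).1
    rw [max_eq_right (by linarith)]
    linarith [hC.nonneg hu hv, hzero u hu]
  · have hv' : 1 - v ∈ Icc (0:ℝ) 1 := Icc.one_sub_mem hv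
    have hupper := (hC.sub_left_mem_Icc hv'.1 (by linarith : 1 - v ≤ u) hu.2 hv).2
    have hzero' := hzero (1 - v) hv'
    rw [sub_sub_cancel] at hzero'
    rw [max_eq_left (by linarith)]
    linarith [hC.add_sub_one_le hu hv]

end IsCopula

/-- For a bivariate copula `C`, `Φ_C = −1` iff `C = W`, the
countermonotonic copula `W(u,v) = max(u+v−1, 0)`. -/
theorem WFootrule_eq_neg_one_iff (C : ℝ → ℝ → ℝ) (hC : IsCopula C) :
    WFootrule C = -1 ↔
      ∀ u ∈ Set.Icc (0:ℝ) 1, ∀ v ∈ Set.Icc (0:ℝ) 1, C u v = max (u + v - 1) 0 := by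
  constructor
  · intro hΦ
    have hint : ∫ u in (0:ℝ)..1, C u (1 - u) = 0 := by
      unfold WFootrule at hΦ
      linarith
    have hzero := eqOn_zero_of_intervalIntegral_eq_zero zero_lt_one
      hC.lipschitzOnWith_antidiagonal.continuousOn
      (fun x hx => hC.nonneg hx (Icc.one_sub_mem hx)) hint
    exact fun u hu v hv => hC.eq_max_of_antidiagonal_eq_zero hzero hu hv
  · intro hW
    have hint : ∫ u in (0:ℝ)..1, C u (1 - u) = 0 := by
      refine (intervalIntegral.integral_congr fun x hx => ?_).trans intervalIntegral.integral_zero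
      rw [uIcc_of_le zero_le_one] at hx
      simpa using hW x hx (1 - x) (Icc.one_sub_mem hx)
    simp [WFootrule, hint]
end

section
/- Define C : [0,1]² → [0,1] by C(u,v) = max{1/2, u+v−1} if (u,v) ∈ [1/2,1]², and C(u,v) = min{u,v} otherwise. Then C is a bivariate copula, Φ_C = 1/2, and C ≠ M where M(u,v) = min{u,v}. In particular, Φ_C = 1/2 does not imply C = M. -/
open MeasureTheory

/-!
`C` is the ordinal sum of `M` on `[0,1/2]²` and of the countermonotonic copula `W` on
`[1/2,1]²`. On `[0,1]²` it equals `min (u ⊓ 1/2) (v ⊓ 1/2) + max 0 (u + v - 3/2)`, a sum of two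
2-increasing functions, hence it is a copula. The antidiagonal `v = 1 - u` meets the `W`-block
only at `(1/2,1/2)`, so `C` and `M` agree there and `Φ_C = Φ_M = 1/2`; yet
`C(3/4,3/4) = 1/2 ≠ 3/4`.
-/

open intervalIntegral

def TwoIncreasing (F : ℝ → ℝ → ℝ) : Prop :=
  ∀ ⦃u₁ u₂ v₁ v₂ : ℝ⦄, u₁ ≤ u₂ → v₁ ≤ v₂ → 0 ≤ F u₂ v₂ - F u₁ v₂ - F u₂ v₁ + F u₁ v₁

namespace TwoIncreasing

theorem add {F G : ℝ → ℝ → ℝ} (hF : TwoIncreasing F) (hG : TwoIncreasing G) :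
    TwoIncreasing (F + G) := fun _ _ _ _ hu hv => by
  have := hF hu hv
  have := hG hu hv
  simp only [Pi.add_apply]
  linarith

theorem comp_monotone {F : ℝ → ℝ → ℝ} (hF : TwoIncreasing F) {f g : ℝ → ℝ} (hf : Monotone f)
    (hg : Monotone g) : TwoIncreasing fun u v => F (f u) (g v) :=
  fun _ _ _ _ hu hv => hF (hf hu) (hg hv)

end TwoIncreasing

theorem twoIncreasing_min : TwoIncreasing min := fun u₁ u₂ v₁ v₂ hu hv => by
  simp only [min_def]
  split_ifs <;> linarith

theorem twoIncreasing_max_zero_add_sub (c : ℝ) : TwoIncreasing fun u v => max 0 (u + v - c) :=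
  fun u₁ u₂ v₁ v₂ hu hv => by
    simp only [max_def]
    split_ifs <;> linarith

/-- Groundedness and uniform margins force the values of a 2-increasing function into `[0,1]`. -/
theorem isCopula_of_margins {C : ℝ → ℝ → ℝ}
    (h_u0 : ∀ u ∈ Set.Icc (0:ℝ) 1, C u 0 = 0) (h_0v : ∀ v ∈ Set.Icc (0:ℝ) 1, C 0 v = 0)
    (h_u1 : ∀ u ∈ Set.Icc (0:ℝ) 1, C u 1 = u) (h_1v : ∀ v ∈ Set.Icc (0:ℝ) 1, C 1 v = v)
    (h_inc : ∀ u₁ u₂ v₁ v₂ : ℝ, 0 ≤ u₁ → u₁ ≤ u₂ → u₂ ≤ 1 → 0 ≤ v₁ → v₁ ≤ v₂ → v₂ ≤ 1 →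
      0 ≤ C u₂ v₂ - C u₁ v₂ - C u₂ v₁ + C u₁ v₁) :
    IsCopula C := by
  refine ⟨fun u hu v hv => ⟨?_, ?_⟩, h_u0, h_0v, h_u1, h_1v, h_inc⟩
  · have := h_inc 0 u 0 v le_rfl hu.1 hu.2 le_rfl hv.1 hv.2
    rw [h_0v v hv, h_u0 u hu, h_0v 0 ⟨le_rfl, zero_le_one⟩] at this
    linarith
  · have := h_inc u 1 0 v hu.1 hu.2 le_rfl le_rfl hv.1 hv.2
    rw [h_1v v hv, h_1v 0 ⟨le_rfl, zero_le_one⟩, h_u0 u hu] at this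
    linarith [hv.2]

theorem integral_min_sub_self : ∫ u in (0:ℝ)..1, min u (1 - u) = 1 / 4 := by
  have h_int : ∀ a b : ℝ, IntervalIntegrable (fun u => min u (1 - u)) volume a b := fun a b =>
    (continuous_id.min (continuous_const.sub continuous_id)).intervalIntegrable a b
  have h_left : ∫ u in (0:ℝ)..1/2, min u (1 - u) = ∫ u in (0:ℝ)..1/2, u :=
    integral_congr fun u hu => by
      rw [Set.uIcc_of_le (by norm_num)] at hu
      exact min_eq_left (by linarith [hu.2])
  have h_right : ∫ u in (1/2:ℝ)..1, min u (1 - u) = ∫ u in (1/2:ℝ)..1, (1 - u) :=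
    integral_congr fun u hu => by
      rw [Set.uIcc_of_le (by norm_num)] at hu
      exact min_eq_right (by linarith [hu.1])
  rw [← integral_add_adjacent_intervals (h_int 0 (1/2)) (h_int (1/2) 1), h_left, h_right,
    integral_sub intervalIntegrable_const intervalIntegrable_id, integral_id,
    intervalIntegral.integral_const]
  norm_num

theorem WFootrule_min : WFootrule min = 1 / 2 := by
  rw [WFootrule, integral_min_sub_self]
  norm_num

noncomputable def ordinalSumMW (u v : ℝ) : ℝ :=
  if u ∈ Set.Icc (1/2 : ℝ) 1 ∧ v ∈ Set.Icc (1/2 : ℝ) 1 then max (1/2) (u + v - 1) else min u v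

namespace ordinalSumMW

theorem eq_min_add_max {u v : ℝ} (hu : u ≤ 1) (hv : v ≤ 1) :
    ordinalSumMW u v = min (min u (1/2)) (min v (1/2)) + max 0 (u + v - 3/2) := by
  simp only [ordinalSumMW, Set.mem_Icc, min_def, max_def]
  split_ifs <;> grind

theorem twoIncreasing_of_le_one (u₁ u₂ v₁ v₂ : ℝ) (hu : u₁ ≤ u₂) (hu₂ : u₂ ≤ 1)
    (hv : v₁ ≤ v₂) (hv₂ : v₂ ≤ 1) :
    0 ≤ ordinalSumMW u₂ v₂ - ordinalSumMW u₁ v₂ - ordinalSumMW u₂ v₁ + ordinalSumMW u₁ v₁ := by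
  have h_sum : TwoIncreasing fun u v => min (min u (1/2)) (min v (1/2)) + max 0 (u + v - 3/2) :=
    (twoIncreasing_min.comp_monotone (monotone_id.min monotone_const)
      (monotone_id.min monotone_const)).add (twoIncreasing_max_zero_add_sub (3/2))
  rw [eq_min_add_max hu₂ hv₂, eq_min_add_max (hu.trans hu₂) hv₂,
    eq_min_add_max hu₂ (hv.trans hv₂), eq_min_add_max (hu.trans hu₂) (hv.trans hv₂)]
  exact h_sum hu hv

theorem isCopula : IsCopula ordinalSumMW := by
  refine isCopula_of_margins ?_ ?_ ?_ ?_
    fun u₁ u₂ v₁ v₂ _ hu hu₂ _ hv hv₂ => twoIncreasing_of_le_one u₁ u₂ v₁ v₂ hu hu₂ hv hv₂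
  all_goals
    rintro x ⟨h₀, h₁⟩
    simp only [ordinalSumMW, Set.mem_Icc, min_def, max_def]
    split_ifs <;> grind

theorem eq_min_on_antidiagonal (u : ℝ) : ordinalSumMW u (1 - u) = min u (1 - u) := by
  simp only [ordinalSumMW, Set.mem_Icc, min_def, max_def]
  split_ifs <;> grind

theorem WFootrule_eq : WFootrule ordinalSumMW = 1 / 2 := by
  simp only [WFootrule, eq_min_on_antidiagonal]
  exact WFootrule_min

end ordinalSumMW

/-- The copula equal to `max{1/2, u+v−1}` on `[1/2,1]²` and to `min{u,v}`
elsewhere is indeed a copula, it satisfies `Φ_C = 1/2`, yet it differs from the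
comonotonic copula `M(u,v) = min{u,v}`. In particular, `Φ_C = 1/2` does not imply
`C = M`. -/
theorem WFootrule_eq_half_not_imp_M :
    IsCopula (fun u v => if u ∈ Set.Icc (1/2 : ℝ) 1 ∧ v ∈ Set.Icc (1/2 : ℝ) 1
        then max (1/2) (u + v - 1) else min u v) ∧
    WFootrule (fun u v => if u ∈ Set.Icc (1/2 : ℝ) 1 ∧ v ∈ Set.Icc (1/2 : ℝ) 1
        then max (1/2) (u + v - 1) else min u v) = 1/2 ∧
    ¬ (∀ u ∈ Set.Icc (0:ℝ) 1, ∀ v ∈ Set.Icc (0:ℝ) 1,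
        (if u ∈ Set.Icc (1/2 : ℝ) 1 ∧ v ∈ Set.Icc (1/2 : ℝ) 1
          then max (1/2) (u + v - 1) else min u v) = min u v) := by
  refine ⟨ordinalSumMW.isCopula, ordinalSumMW.WFootrule_eq, fun h_eq_M => ?_⟩
  have := h_eq_M (3/4) (by norm_num) (3/4) (by norm_num)
  norm_num at this
end

section
/- (Sheppard's orthant probability formula.) Let ρ ∈ (−1,1) and let φ_ρ(x,y) = (1/(2π√(1−ρ²))) exp(−(x² − 2ρxy + y²)/(2(1−ρ²))) be the standardized bivariate normal density with correlation ρ. Then ∫_{−∞}^0 ∫_{−∞}^0 φ_ρ(x,y) dx dy = 1/4 + arcsin(ρ)/(2π). -/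
/-!
Completing the square, `φ_ρ(x, y) = e^{-y²/2} e^{-(x - ρy)²/(2s²)} / (2πs)` with `s = √(1 - ρ²)`.
The inner integral over `x ≤ 0` is the Gaussian integral over `x ≤ -ρy`: a half-Gaussian plus
`∫₀^{-ρy}`, and the substitution `x = -ρyu` turns the latter into an integral over `u ∈ [0, 1]`
whose integrand is again Gaussian in `y`. The half-Gaussians contribute `1/4`; after Fubini the
`y`-integral is elementary, `ρ / (1 + (ρu/s)²)`, and integrating over `u` gives
`s · arctan (ρ/s) = s · arcsin ρ`.
-/
open MeasureTheory Real Set Filter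

lemma integral_Iic_zero_exp_neg_mul_sq (b : ℝ) :
    ∫ x in Iic 0, exp (-b * x ^ 2) = √(π / b) / 2 := by
  have h := integral_comp_neg_Iic 0 fun x => exp (-b * x ^ 2)
  simp only [neg_sq, neg_zero] at h
  rw [h, integral_gaussian_Ioi]

lemma integral_Iic_zero_mul_exp_neg_mul_sq {b : ℝ} (hb : 0 < b) :
    ∫ x in Iic 0, x * exp (-b * x ^ 2) = -(2 * b)⁻¹ := by
  have hIoi : ∫ x in Ioi 0, x * exp (-b * x ^ 2) = (2 * b)⁻¹ := by
    have h : ∫ x in Ioi 0, ((x * exp (-b * x ^ 2) : ℝ) : ℂ) = ((2 * b)⁻¹ : ℝ) := by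
      push_cast
      exact integral_mul_cexp_neg_mul_sq (by simpa using hb)
    exact_mod_cast integral_complex_ofReal.symm.trans h
  have h := integral_comp_neg_Iic 0 fun x => x * exp (-b * x ^ 2)
  simp only [neg_sq, neg_zero, neg_mul, integral_neg] at h hIoi ⊢
  linarith

lemma integral_Iic_zero_exp_neg_mul_sub_sq {b : ℝ} (hb : 0 < b) (c : ℝ) :
    ∫ x in Iic 0, exp (-b * (x - c) ^ 2)
      = √(π / b) / 2 - ∫ u in 0..1, c * exp (-(b * c ^ 2) * u ^ 2) := by
  have hshift := (measurePreserving_sub_right volume c).setIntegral_preimage_emb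
    (measurableEmbedding_subRight c) (fun x => exp (-b * x ^ 2)) (Iic (-c))
  simp only [preimage_sub_const_Iic, neg_add_cancel] at hshift
  have hsplit := intervalIntegral.integral_Iic_sub_Iic (a := 0) (b := -c)
    (integrable_exp_neg_mul_sq hb).integrableOn (integrable_exp_neg_mul_sq hb).integrableOn
  have hscale := intervalIntegral.smul_integral_comp_mul_left (a := 0) (b := 1)
    (fun x => exp (-b * x ^ 2)) (-c)
  simp only [mul_zero, mul_one, smul_eq_mul, ← intervalIntegral.integral_const_mul] at hscale
  have hneg : ∫ u in 0..1, -c * exp (-b * (-c * u) ^ 2)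
      = -∫ u in 0..1, c * exp (-(b * c ^ 2) * u ^ 2) := by
    rw [← intervalIntegral.integral_neg]
    congr 1 with u
    ring_nf
  rw [← hshift, integral_Iic_zero_exp_neg_mul_sq, ← hscale, hneg] at hsplit
  linarith

lemma integral_div_one_add_mul_sq (t : ℝ) :
    ∫ u in 0..1, t / (1 + (t * u) ^ 2) = arctan t := by
  have hderiv (u : ℝ) : HasDerivAt (fun u => arctan (t * u)) (t / (1 + (t * u) ^ 2)) u := by
    convert ((hasDerivAt_id' u).const_mul t).arctan using 1
    field_simp
  have hcont : Continuous fun u : ℝ => t / (1 + (t * u) ^ 2) :=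
    continuous_const.div (by fun_prop) fun u => by positivity
  rw [intervalIntegral.integral_eq_sub_of_hasDerivAt (fun u _ => hderiv u)
    (hcont.intervalIntegrable 0 1)]
  simp

lemma integrable_prod_mul_exp_neg_one_add_mul_sq (t : ℝ) (S : Set ℝ) (ν : Measure ℝ)
    [IsFiniteMeasure ν] :
    Integrable (fun p : ℝ × ℝ => p.1 * exp (-((1 + (t * p.2) ^ 2) / 2) * p.1 ^ 2))
      ((volume.restrict S).prod ν) := by
  have hbound : Integrable (fun p : ℝ × ℝ => |p.1 * exp (-2⁻¹ * p.1 ^ 2)| * 1)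
      ((volume.restrict S).prod ν) :=
    (integrable_mul_exp_neg_mul_sq (by norm_num)).abs.restrict.mul_prod (integrable_const 1)
  refine hbound.mono' (by fun_prop) (Eventually.of_forall fun p => ?_)
  rw [mul_one, norm_mul, abs_mul, norm_of_nonneg (exp_pos _).le, abs_of_pos (exp_pos _),
    Real.norm_eq_abs]
  gcongr
  nlinarith [sq_nonneg (t * p.2 * p.1)]

lemma integral_Iic_exp_bivariate (ρ y : ℝ) {s : ℝ} (hs : 0 < s) :
    ∫ x in Iic 0, exp (-(2 * s ^ 2)⁻¹ * (x - ρ * y) ^ 2) * exp (-2⁻¹ * y ^ 2)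
      = s * √(2 * π) / 2 * exp (-2⁻¹ * y ^ 2)
        - ∫ u in Ioc 0 1, ρ * (y * exp (-((1 + (ρ / s * u) ^ 2) / 2) * y ^ 2)) := by
  have hsqrt : √(π / (2 * s ^ 2)⁻¹) = s * √(2 * π) := by
    rw [div_inv_eq_mul, show π * (2 * s ^ 2) = s ^ 2 * (2 * π) by ring,
      sqrt_mul (by positivity), sqrt_sq hs.le]
  rw [integral_mul_const, integral_Iic_zero_exp_neg_mul_sub_sq (by positivity), hsqrt, sub_mul,
    intervalIntegral.integral_of_le zero_le_one, ← integral_mul_const]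
  congr 2 with u
  rw [mul_assoc, ← exp_add, mul_assoc]
  congr 3
  field_simp
  ring

lemma integral_Iic_Iic_exp_bivariate (ρ : ℝ) {s : ℝ} (hs : 0 < s) :
    ∫ y in Iic 0, ∫ x in Iic 0, exp (-(2 * s ^ 2)⁻¹ * (x - ρ * y) ^ 2) * exp (-2⁻¹ * y ^ 2)
      = s * (π / 2 + arctan (ρ / s)) := by
  have hG := (integrable_prod_mul_exp_neg_one_add_mul_sq (ρ / s) (Iic 0)
    (volume.restrict (Ioc 0 1))).const_mul ρ
  have hgauss : ∫ y in Iic 0, s * √(2 * π) / 2 * exp (-2⁻¹ * y ^ 2) = s * (π / 2) := by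
    rw [integral_const_mul, integral_Iic_zero_exp_neg_mul_sq, div_inv_eq_mul, mul_comm π 2]
    linear_combination (s / 4) * mul_self_sqrt two_pi_pos.le
  have hinner (u : ℝ) : ∫ y in Iic 0, ρ * (y * exp (-((1 + (ρ / s * u) ^ 2) / 2) * y ^ 2))
      = -(s * (ρ / s / (1 + (ρ / s * u) ^ 2))) := by
    rw [integral_const_mul, integral_Iic_zero_mul_exp_neg_mul_sq (by positivity)]
    field_simp
  rw [integral_congr_ae (Eventually.of_forall fun y => integral_Iic_exp_bivariate ρ y hs),
    integral_sub ((integrable_exp_neg_mul_sq (by norm_num)).const_mul _).restrict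
      hG.integral_prod_left, hgauss, integral_integral_swap hG,
    integral_congr_ae (Eventually.of_forall hinner), integral_neg, integral_const_mul,
    ← intervalIntegral.integral_of_le zero_le_one, integral_div_one_add_mul_sq]
  ring

/-- Sheppard's orthant probability formula: for the standardized
bivariate normal density `φ_ρ` with correlation `ρ ∈ (−1,1)`, the negative orthant
probability is `∫_{−∞}^0 ∫_{−∞}^0 φ_ρ(x,y) dx dy = 1/4 + arcsin(ρ)/(2π)`. -/
theorem sheppard_orthant_probability (ρ : ℝ) (hρ : ρ ∈ Set.Ioo (-1 : ℝ) 1)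
    (φ : ℝ → ℝ → ℝ)
    (hφ : ∀ x y : ℝ, φ x y =
      (1 / (2 * π * Real.sqrt (1 - ρ ^ 2))) *
        Real.exp (-(x ^ 2 - 2 * ρ * x * y + y ^ 2) / (2 * (1 - ρ ^ 2)))) :
    ∫ y in Set.Iic (0:ℝ), ∫ x in Set.Iic (0:ℝ), φ x y
      = 1 / 4 + arcsin ρ / (2 * π) := by
  have hρ2 : 0 < 1 - ρ ^ 2 := by nlinarith [hρ.1, hρ.2]
  set s := √(1 - ρ ^ 2)
  have hs : 0 < s := sqrt_pos.mpr hρ2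
  have hs2 : s ^ 2 = 1 - ρ ^ 2 := sq_sqrt hρ2.le
  have hφ' (x y : ℝ) : φ x y
      = (2 * π * s)⁻¹ * (exp (-(2 * s ^ 2)⁻¹ * (x - ρ * y) ^ 2) * exp (-2⁻¹ * y ^ 2)) := by
    rw [hφ, ← exp_add, one_div, ← hs2]
    congr 2
    field_simp
    linear_combination y ^ 2 * hs2
  simp_rw [hφ', integral_const_mul, integral_Iic_Iic_exp_bivariate ρ hs, arcsin_eq_arctan hρ]
  field_simp
  ring
end

section
/- Let C be a bivariate copula whose first-order partial derivatives ∂₁C and ∂₂C exist on (0,1)² and take values in [0,1], and are such that s ↦ ∂₁C(s,1−s) and s ↦ ∂₂C(s,1−s) are integrable on (0,1). Define j_C(u,v) = max(1−u−v, 0) − ∫_u¹ ∂₁C(s,1−s) ds − ∫₀^{1−v} ∂₂C(s,1−s) ds. Then −2 ≤ j_C(u,v) ≤ 1 for all (u,v) ∈ [0,1]², and consequently |6·j_C(u,v)| ≤ 12 for all (u,v) ∈ [0,1]². -/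
/-!
The integrands take values in `[0, 1]`, so `∫_u¹ ∂₁C(s,1−s) ds ∈ [0, 1 − u]` and
`∫₀^{1−v} ∂₂C(s,1−s) ds ∈ [0, 1 − v]`; together with `0 ≤ max(1−u−v, 0) ≤ 1` this gives
`−2 ≤ j_C ≤ 1`.
-/

open MeasureTheory

theorem intervalIntegral_mem_Icc_of_mem_Icc {f : ℝ → ℝ} {a b m M : ℝ} (hab : a ≤ b)
    (hf : IntervalIntegrable f volume a b) (hmem : ∀ x ∈ Set.Ioo a b, f x ∈ Set.Icc m M) :
    (∫ x in a..b, f x) ∈ Set.Icc ((b - a) * m) ((b - a) * M) := by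
  constructor
  · simpa using intervalIntegral.integral_mono_on_of_le_Ioo hab intervalIntegrable_const hf
      fun x hx => (hmem x hx).1
  · simpa using intervalIntegral.integral_mono_on_of_le_Ioo hab hf intervalIntegrable_const
      fun x hx => (hmem x hx).2

theorem mem_Icc_of_mem_Ioo_antidiagonal {D : ℝ → ℝ → ℝ}
    (hD : ∀ u v : ℝ, u ∈ Set.Ioo (0:ℝ) 1 → v ∈ Set.Ioo (0:ℝ) 1 → D u v ∈ Set.Icc (0:ℝ) 1) :
    ∀ s ∈ Set.Ioo (0:ℝ) 1, D s (1 - s) ∈ Set.Icc (0:ℝ) 1 :=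
  fun s hs => hD s (1 - s) hs ⟨by linarith [hs.2], by linarith [hs.1]⟩

theorem influence_function_bounded_general (D₁ D₂ : ℝ → ℝ → ℝ)
    (hD₁mem : ∀ u v : ℝ, u ∈ Set.Ioo (0:ℝ) 1 → v ∈ Set.Ioo (0:ℝ) 1 →
      D₁ u v ∈ Set.Icc (0:ℝ) 1)
    (hD₂mem : ∀ u v : ℝ, u ∈ Set.Ioo (0:ℝ) 1 → v ∈ Set.Ioo (0:ℝ) 1 →
      D₂ u v ∈ Set.Icc (0:ℝ) 1)
    (hD₁int : IntervalIntegrable (fun s => D₁ s (1 - s)) MeasureTheory.volume 0 1)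
    (hD₂int : IntervalIntegrable (fun s => D₂ s (1 - s)) MeasureTheory.volume 0 1) :
    ∀ u ∈ Set.Icc (0:ℝ) 1, ∀ v ∈ Set.Icc (0:ℝ) 1,
      (-2 ≤ max (1 - u - v) 0 - (∫ s in u..1, D₁ s (1 - s))
          - ∫ s in (0:ℝ)..(1 - v), D₂ s (1 - s)) ∧
      (max (1 - u - v) 0 - (∫ s in u..1, D₁ s (1 - s))
          - (∫ s in (0:ℝ)..(1 - v), D₂ s (1 - s)) ≤ 1) ∧
      |6 * (max (1 - u - v) 0 - (∫ s in u..1, D₁ s (1 - s))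
          - ∫ s in (0:ℝ)..(1 - v), D₂ s (1 - s))| ≤ 12 := by
  rintro u ⟨hu₀, hu₁⟩ v ⟨hv₀, hv₁⟩
  obtain ⟨hI₁₀, hI₁⟩ := intervalIntegral_mem_Icc_of_mem_Icc hu₁
    (hD₁int.mono_set (Set.uIcc_subset_uIcc (Set.mem_uIcc_of_le hu₀ hu₁) Set.right_mem_uIcc))
    fun s hs => mem_Icc_of_mem_Ioo_antidiagonal hD₁mem s (Set.Ioo_subset_Ioo_left hu₀ hs)
  obtain ⟨hI₂₀, hI₂⟩ := intervalIntegral_mem_Icc_of_mem_Icc (by linarith : (0:ℝ) ≤ 1 - v)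
    (hD₂int.mono_set (Set.uIcc_subset_uIcc Set.left_mem_uIcc
      (Set.mem_uIcc_of_le (by linarith) (by linarith))))
    fun s hs => mem_Icc_of_mem_Ioo_antidiagonal hD₂mem s
      (Set.Ioo_subset_Ioo_right (by linarith) hs)
  have hmax : max (1 - u - v) 0 ∈ Set.Icc (0:ℝ) 1 :=
    ⟨le_max_right _ _, max_le (by linarith) zero_le_one⟩
  have hlower : -2 ≤ max (1 - u - v) 0 - (∫ s in u..1, D₁ s (1 - s))
      - ∫ s in (0:ℝ)..(1 - v), D₂ s (1 - s) := by linarith [hmax.1]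
  have hupper : max (1 - u - v) 0 - (∫ s in u..1, D₁ s (1 - s))
      - (∫ s in (0:ℝ)..(1 - v), D₂ s (1 - s)) ≤ 1 := by linarith [hmax.2]
  exact ⟨hlower, hupper, abs_le.2 ⟨by linarith, by linarith⟩⟩

/-- If `C` is a copula whose partial derivatives `∂₁C` and `∂₂C` exist
on `(0,1)²` with values in `[0,1]`, and are integrable along the anti-diagonal, then
the influence function
`j_C(u,v) = max(1−u−v,0) − ∫_u¹ ∂₁C(s,1−s) ds − ∫₀^{1−v} ∂₂C(s,1−s) ds`
satisfies `−2 ≤ j_C ≤ 1` on `[0,1]²`, and consequently `|6·j_C| ≤ 12` there. -/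
theorem influence_function_bounded (C D₁ D₂ : ℝ → ℝ → ℝ) (hC : IsCopula C)
    (hD₁ : ∀ u v : ℝ, u ∈ Set.Ioo (0:ℝ) 1 → v ∈ Set.Ioo (0:ℝ) 1 →
      HasDerivAt (fun t => C t v) (D₁ u v) u)
    (hD₂ : ∀ u v : ℝ, u ∈ Set.Ioo (0:ℝ) 1 → v ∈ Set.Ioo (0:ℝ) 1 →
      HasDerivAt (fun t => C u t) (D₂ u v) v)
    (hD₁mem : ∀ u v : ℝ, u ∈ Set.Ioo (0:ℝ) 1 → v ∈ Set.Ioo (0:ℝ) 1 →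
      D₁ u v ∈ Set.Icc (0:ℝ) 1)
    (hD₂mem : ∀ u v : ℝ, u ∈ Set.Ioo (0:ℝ) 1 → v ∈ Set.Ioo (0:ℝ) 1 →
      D₂ u v ∈ Set.Icc (0:ℝ) 1)
    (hD₁int : IntervalIntegrable (fun s => D₁ s (1 - s)) MeasureTheory.volume 0 1)
    (hD₂int : IntervalIntegrable (fun s => D₂ s (1 - s)) MeasureTheory.volume 0 1) :
    ∀ u ∈ Set.Icc (0:ℝ) 1, ∀ v ∈ Set.Icc (0:ℝ) 1,
      (-2 ≤ max (1 - u - v) 0 - (∫ s in u..1, D₁ s (1 - s))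
          - ∫ s in (0:ℝ)..(1 - v), D₂ s (1 - s)) ∧
      (max (1 - u - v) 0 - (∫ s in u..1, D₁ s (1 - s))
          - (∫ s in (0:ℝ)..(1 - v), D₂ s (1 - s)) ≤ 1) ∧
      |6 * (max (1 - u - v) 0 - (∫ s in u..1, D₁ s (1 - s))
          - ∫ s in (0:ℝ)..(1 - v), D₂ s (1 - s))| ≤ 12 :=
  influence_function_bounded_general D₁ D₂ hD₁mem hD₂mem hD₁int hD₂int
end
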